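/- Let δ⁻ ≤ δ⁺ be real numbers, let α(x) := min(δ⁻x, δ⁺x), β(x) := max(δ⁻x, δ⁺x) for x ∈ ℝ, let z₁ ≠ z₂ be distinct complex numbers and p > 1 a real number, and put m := M_{z₁,z₂}(e^{2πi/p}). Then m belongs to the leaf L(z₁,z₂;p,α,β), the leaf L(z₁,z₂;p,α,β) is a connected subset of ℂ, and the point m separates the leaf, i.e. L(z₁,z₂;p,α,β) ∖ {m} is not connected. -/

import Mathlib

/-- The Möbius transform `M_{z₁,z₂}(ζ) = (z₂ ζ - z₁)/(ζ - 1)`. -/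
noncomputable def moebius (z₁ z₂ ζ : ℂ) : ℂ := (z₂ * ζ - z₁) / (ζ - 1)

/-- The set `Y(p, α, β) = {γ = x + iy : 1/p + α(x) ≤ y ≤ 1/p + β(x)}`. -/
def Yset (p : ℝ) (α β : ℝ → ℝ) : Set ℂ :=
  {γ : ℂ | 1 / p + α γ.re ≤ γ.im ∧ γ.im ≤ 1 / p + β γ.re}

/-- The leaf `𝓛(z₁, z₂; p, α, β) = {M_{z₁,z₂}(e^{2πγ}) : γ ∈ Y(p,α,β)} ∪ {z₁, z₂}`. -/
noncomputable def leaf (z₁ z₂ : ℂ) (p : ℝ) (α β : ℝ → ℝ) : Set ℂ :=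
  ((fun γ : ℂ => moebius z₁ z₂ (Complex.exp (2 * Real.pi * γ))) '' Yset p α β) ∪ {z₁, z₂}

/-- The circular arc `𝒜(z₁, z₂; p)`: the points `z ∉ {z₁, z₂}` such that (some value of)
`arg ((z - z₁)/(z - z₂))` is congruent to `2π/p` modulo `2π`, together with `z₁` and `z₂`. -/
noncomputable def circularArc (z₁ z₂ : ℂ) (p : ℝ) : Set ℂ :=
  {z : ℂ | z ≠ z₁ ∧ z ≠ z₂ ∧
    ∃ k : ℤ, Complex.arg ((z - z₁) / (z - z₂)) = 2 * Real.pi / p + 2 * Real.pi * k} ∪ {z₁, z₂}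

/-- The logarithmic double spiral `𝒮(z₁, z₂; p, δ)`: the points `z ∉ {z₁, z₂}` such that
`arg ((z - z₁)/(z - z₂)) - δ log |(z - z₁)/(z - z₂)|` is congruent to `2π/p` modulo `2π`,
together with `z₁` and `z₂`. -/
noncomputable def logSpiral (z₁ z₂ : ℂ) (p δ : ℝ) : Set ℂ :=
  {z : ℂ | z ≠ z₁ ∧ z ≠ z₂ ∧
    ∃ k : ℤ, Complex.arg ((z - z₁) / (z - z₂)) -
        δ * Real.log ‖(z - z₁) / (z - z₂)‖ =
      2 * Real.pi / p + 2 * Real.pi * k} ∪ {z₁, z₂}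

/-!
Write `ζ = e^{2πγ}`. Then `|M(ζ) - z₁| = |ζ| |M(ζ) - z₂|` with `|ζ| = e^{2π Re γ}`, and the only
point of `Y` on the imaginary axis is `i/p`, which is sent to `m`. So `𝓛 ∖ {m}` contains `z₁` and
`z₂` but misses the perpendicular bisector of `z₁ z₂`, hence is disconnected. For connectedness,
`Y` is a retract of `ℂ` (clamp the imaginary part between the two graphs), so its image is
connected, and `z₁`, `z₂` are limits of that image as `Re γ → ∓∞`.
-/

open Complex Filter Topology Set
open scoped Real

section Moebius

variable {z₁ z₂ ζ : ℂ}

lemma moebius_zero : moebius z₁ z₂ 0 = z₁ := by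
  simp [moebius]

lemma moebius_inv (h : ζ ≠ 0) : moebius z₂ z₁ ζ⁻¹ = moebius z₁ z₂ ζ := by
  rw [moebius, moebius, ← mul_div_mul_left _ _ (neg_ne_zero.2 h)]
  congr 1 <;> field_simp <;> ring

lemma moebius_sub_right (h : ζ ≠ 1) : moebius z₁ z₂ ζ - z₂ = (z₂ - z₁) / (ζ - 1) := by
  have h' : ζ - 1 ≠ 0 := sub_ne_zero.2 h
  rw [moebius, div_sub' h']
  ring_nf

lemma moebius_sub_left (h : ζ ≠ 1) : moebius z₁ z₂ ζ - z₁ = ζ * (z₂ - z₁) / (ζ - 1) := by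
  have h' : ζ - 1 ≠ 0 := sub_ne_zero.2 h
  rw [moebius, div_sub' h']
  ring_nf

lemma continuousAt_moebius (h : ζ ≠ 1) : ContinuousAt (moebius z₁ z₂) ζ :=
  ContinuousAt.div (by fun_prop) (by fun_prop) (sub_ne_zero.2 h)

lemma tendsto_moebius_cobounded : Tendsto (moebius z₁ z₂) (Bornology.cobounded ℂ) (𝓝 z₂) := by
  have h := (continuousAt_moebius (z₁ := z₂) (z₂ := z₁) zero_ne_one).tendsto.comp
    tendsto_inv₀_cobounded
  rw [moebius_zero] at h
  exact h.congr' ((Bornology.eventually_ne_cobounded 0).mono fun ζ hζ => moebius_inv hζ)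

lemma moebius_ne_right (hz : z₁ ≠ z₂) (h : ζ ≠ 1) : moebius z₁ z₂ ζ ≠ z₂ := by
  rw [← sub_ne_zero, moebius_sub_right h]
  exact div_ne_zero (sub_ne_zero.2 hz.symm) (sub_ne_zero.2 h)

lemma moebius_ne_left (hz : z₁ ≠ z₂) (h₀ : ζ ≠ 0) (h₁ : ζ ≠ 1) : moebius z₁ z₂ ζ ≠ z₁ := by
  rw [← moebius_inv h₀]
  exact moebius_ne_right hz.symm (inv_ne_one.2 h₁)

lemma dist_moebius_left (h : ζ ≠ 1) :
    dist (moebius z₁ z₂ ζ) z₁ = ‖ζ‖ * dist (moebius z₁ z₂ ζ) z₂ := by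
  rw [dist_eq_norm, dist_eq_norm, moebius_sub_left h, moebius_sub_right h, mul_div_assoc, norm_mul]

lemma dist_moebius_left_ne_right (hz : z₁ ≠ z₂) (h : ζ ≠ 1) (hζ : ‖ζ‖ ≠ 1) :
    dist (moebius z₁ z₂ ζ) z₁ ≠ dist (moebius z₁ z₂ ζ) z₂ := by
  rw [dist_moebius_left h, Ne, mul_eq_right₀ (dist_ne_zero.2 (moebius_ne_right hz h))]
  exact hζ

end Moebius

lemma not_isPreconnected_of_dist_ne {X : Type*} [PseudoMetricSpace X] {s : Set X} {x y : X}
    (hx : x ∈ s) (hy : y ∈ s) (hs : ∀ w ∈ s, dist w x ≠ dist w y) : ¬ IsPreconnected s := by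
  intro hpc
  obtain ⟨w, -, hwx, hwy⟩ := hpc {w | dist w x < dist w y} {w | dist w y < dist w x}
    (isOpen_lt (by fun_prop) (by fun_prop)) (isOpen_lt (by fun_prop) (by fun_prop))
    (fun w hw => (hs w hw).lt_or_gt)
    ⟨x, hx, ((dist_self x).trans_le dist_nonneg).lt_of_ne (hs x hx)⟩
    ⟨y, hy, ((dist_self y).trans_le dist_nonneg).lt_of_ne (hs y hy).symm⟩
  exact lt_asymm (show dist w x < dist w y from hwx) hwy

section Yset

variable {p : ℝ} {α β : ℝ → ℝ} {γ : ℂ}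

noncomputable def ysetProj (p : ℝ) (α β : ℝ → ℝ) (γ : ℂ) : ℂ :=
  γ.re + (max (1 / p + α γ.re) (min γ.im (1 / p + β γ.re)) : ℝ) * I

@[simp] lemma re_ysetProj : (ysetProj p α β γ).re = γ.re := by
  simp [ysetProj]

@[simp] lemma im_ysetProj :
    (ysetProj p α β γ).im = max (1 / p + α γ.re) (min γ.im (1 / p + β γ.re)) := by
  simp [ysetProj]

lemma continuous_ysetProj (hα : Continuous α) (hβ : Continuous β) :
    Continuous (ysetProj p α β) := by
  unfold ysetProj; fun_prop

lemma ysetProj_mem_Yset (hαβ : α ≤ β) (γ : ℂ) : ysetProj p α β γ ∈ Yset p α β := by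
  have := hαβ γ.re
  constructor <;> simp only [re_ysetProj, im_ysetProj] <;> grind

lemma ysetProj_of_mem (hγ : γ ∈ Yset p α β) : ysetProj p α β γ = γ := by
  apply Complex.ext <;> simp only [re_ysetProj, im_ysetProj, min_eq_left hγ.2, max_eq_right hγ.1]

lemma range_ysetProj (hαβ : α ≤ β) : range (ysetProj p α β) = Yset p α β :=
  (range_subset_iff.2 (ysetProj_mem_Yset hαβ)).antisymm
    fun γ hγ => ⟨γ, ysetProj_of_mem hγ⟩

lemma isConnected_Yset (hα : Continuous α) (hβ : Continuous β) (hαβ : α ≤ β) :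
    IsConnected (Yset p α β) :=
  range_ysetProj hαβ ▸ isConnected_range (continuous_ysetProj hα hβ)

lemma exp_two_pi_mul_ne_one_of_mem_Yset (h₀ : 0 < 1 / p + α 0) (h₁ : 1 / p + β 0 < 1)
    (hγ : γ ∈ Yset p α β) : exp (2 * π * γ) ≠ 1 := by
  rw [Ne, exp_eq_one_iff]
  rintro ⟨n, hn⟩
  have hγn : γ = n * I := by
    apply mul_left_cancel₀ (by simp [Real.pi_ne_zero] : (2 * π : ℂ) ≠ 0)
    rw [hn]; ring
  obtain ⟨hlow, hhigh⟩ := hγ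
  rw [show γ.re = 0 by simp [hγn], show γ.im = n by simp [hγn]] at hlow hhigh
  have h0 : (0 : ℝ) < n := by linarith
  have h1 : (n : ℝ) < 1 := by linarith
  norm_cast at h0 h1
  omega

lemma I_div_mem_Yset (hα : α 0 ≤ 0) (hβ : 0 ≤ β 0) : I / p ∈ Yset p α β := by
  constructor <;> simp <;> linarith

lemma eq_I_div_of_mem_Yset (hα : α 0 = 0) (hβ : β 0 = 0) (hγ : γ ∈ Yset p α β)
    (hre : γ.re = 0) : γ = I / p := by
  obtain ⟨hlow, hhigh⟩ := hγ
  rw [hre, hα] at hlow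
  rw [hre, hβ] at hhigh
  have him : γ.im = 1 / p := le_antisymm (by simpa using hhigh) (by simpa using hlow)
  exact Complex.ext (by simp [hre]) (by simp [him])

end Yset

section Leaf

variable {z₁ z₂ : ℂ} {p : ℝ} {α β : ℝ → ℝ}

lemma tendsto_two_pi_mul_comap_re {l : Filter ℝ} (hl : Tendsto (2 * π * ·) l l) :
    Tendsto (fun γ : ℂ => 2 * π * γ) (comap re l) (comap re l) := by
  refine tendsto_comap_iff.2 ?_
  have : (re ∘ fun γ : ℂ => 2 * π * γ) = (2 * π * ·) ∘ re := by ext γ; simp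
  rw [this]
  exact hl.comp tendsto_comap

lemma tendsto_moebius_exp_comap_re_atBot :
    Tendsto (fun γ : ℂ => moebius z₁ z₂ (exp (2 * π * γ))) (comap re atBot) (𝓝 z₁) := by
  have h := (continuousAt_moebius (z₁ := z₁) (z₂ := z₂) zero_ne_one).tendsto.comp
    (tendsto_exp_comap_re_atBot.comp
      (tendsto_two_pi_mul_comap_re (tendsto_id.const_mul_atBot Real.two_pi_pos)))
  rwa [moebius_zero] at h

lemma tendsto_moebius_exp_comap_re_atTop :
    Tendsto (fun γ : ℂ => moebius z₁ z₂ (exp (2 * π * γ))) (comap re atTop) (𝓝 z₂) :=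
  tendsto_moebius_cobounded.comp (tendsto_exp_comap_re_atTop.comp
    (tendsto_two_pi_mul_comap_re (tendsto_id.const_mul_atTop Real.two_pi_pos)))

lemma mem_closure_image_Yset {f : ℂ → ℂ} {z : ℂ} {l : Filter ℝ} [l.NeBot] (hαβ : α ≤ β)
    (hf : Tendsto f (comap re l) (𝓝 z)) : z ∈ closure (f '' Yset p α β) :=
  mem_closure_of_tendsto
    (hf.comp (tendsto_comap_iff.2 (by simp [Function.comp_def]; exact tendsto_id)))
    (Eventually.of_forall fun x : ℝ => mem_image_of_mem f (ysetProj_mem_Yset hαβ x))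

lemma leaf_subset_closure (hαβ : α ≤ β) :
    leaf z₁ z₂ p α β ⊆
      closure ((fun γ : ℂ => moebius z₁ z₂ (exp (2 * π * γ))) '' Yset p α β) :=
  union_subset subset_closure <| insert_subset_iff.2
    ⟨mem_closure_image_Yset hαβ tendsto_moebius_exp_comap_re_atBot,
      singleton_subset_iff.2 (mem_closure_image_Yset hαβ tendsto_moebius_exp_comap_re_atTop)⟩

theorem isConnected_leaf (hα : Continuous α) (hβ : Continuous β) (hαβ : α ≤ β)
    (h₀ : 0 < 1 / p + α 0) (h₁ : 1 / p + β 0 < 1) : IsConnected (leaf z₁ z₂ p α β) := by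
  have hcont : ContinuousOn (fun γ : ℂ => moebius z₁ z₂ (exp (2 * π * γ))) (Yset p α β) :=
    fun γ hγ => ((continuousAt_moebius (exp_two_pi_mul_ne_one_of_mem_Yset h₀ h₁ hγ)).comp
      (f := fun γ : ℂ => exp (2 * π * γ)) (by fun_prop)).continuousWithinAt
  exact ((isConnected_Yset hα hβ hαβ).image _ hcont).subset_closure subset_union_left
    (leaf_subset_closure hαβ)

lemma moebius_exp_mem_leaf (hα : α 0 ≤ 0) (hβ : 0 ≤ β 0) :
    moebius z₁ z₂ (exp (2 * π * I / p)) ∈ leaf z₁ z₂ p α β :=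
  .inl ⟨I / p, I_div_mem_Yset hα hβ, by simp only [mul_div_assoc]⟩

theorem not_isPreconnected_leaf_diff (hz : z₁ ≠ z₂) (h₀ : 0 < 1 / p) (h₁ : 1 / p < 1)
    (hα : α 0 = 0) (hβ : β 0 = 0) :
    ¬ IsPreconnected (leaf z₁ z₂ p α β \ {moebius z₁ z₂ (exp (2 * π * I / p))}) := by
  have hne : ∀ γ ∈ Yset p α β, exp (2 * π * γ) ≠ 1 := fun γ =>
    exp_two_pi_mul_ne_one_of_mem_Yset (by rwa [hα, add_zero]) (by rwa [hβ, add_zero])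
  have hm : exp (2 * π * I / p) ≠ 1 := by
    simpa only [mul_div_assoc] using hne _ (I_div_mem_Yset hα.le hβ.ge)
  refine not_isPreconnected_of_dist_ne (x := z₁) (y := z₂)
    ⟨.inr (.inl rfl), (moebius_ne_left hz (exp_ne_zero _) hm).symm⟩
    ⟨.inr (.inr rfl), (moebius_ne_right hz hm).symm⟩ ?_
  rintro w ⟨(⟨γ, hγ, rfl⟩ | rfl | rfl), hwm⟩
  · refine dist_moebius_left_ne_right hz (hne γ hγ) ?_
    have hre : γ.re ≠ 0 := fun hre => hwm <| by
      simp only [eq_I_div_of_mem_Yset hα hβ hγ hre, mul_div_assoc, mem_singleton_iff]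
    simpa [norm_exp, Real.pi_ne_zero] using hre
  · simpa using hz
  · simpa using hz.symm

end Leaf

theorem leaf_median_separating_point_general (δminus δplus : ℝ)
    (z₁ z₂ : ℂ) (hz : z₁ ≠ z₂) (p : ℝ) (hp : 1 < p) :
    moebius z₁ z₂ (Complex.exp (2 * Real.pi * Complex.I / p)) ∈
      leaf z₁ z₂ p (fun x => min (δminus * x) (δplus * x))
        (fun x => max (δminus * x) (δplus * x)) ∧
    IsConnected (leaf z₁ z₂ p (fun x => min (δminus * x) (δplus * x))
        (fun x => max (δminus * x) (δplus * x))) ∧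
    ¬ IsPreconnected (leaf z₁ z₂ p (fun x => min (δminus * x) (δplus * x))
        (fun x => max (δminus * x) (δplus * x)) \
      {moebius z₁ z₂ (Complex.exp (2 * Real.pi * Complex.I / p))}) := by
  have h₀ : 0 < 1 / p := one_div_pos.2 (zero_lt_one.trans hp)
  have h₁ : 1 / p < 1 := (div_lt_one (zero_lt_one.trans hp)).2 hp
  exact ⟨moebius_exp_mem_leaf (by simp) (by simp),
    isConnected_leaf (by fun_prop) (by fun_prop) (fun _ => min_le_max) (by simpa using h₀)
      (by simpa using h₁),
    not_isPreconnected_leaf_diff hz h₀ h₁ (by simp) (by simp)⟩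

/-- For `α(x) = min (δ⁻ x, δ⁺ x)`, `β(x) = max (δ⁻ x, δ⁺ x)`, the point
`m := M_{z₁,z₂}(e^{2πi/p})` belongs to the leaf `𝓛(z₁, z₂; p, α, β)`, the leaf is a
connected subset of `ℂ`, and `m` separates the leaf: removing `m` disconnects it. -/
theorem leaf_median_separating_point (δminus δplus : ℝ) (hδ : δminus ≤ δplus)
    (z₁ z₂ : ℂ) (hz : z₁ ≠ z₂) (p : ℝ) (hp : 1 < p) :
    moebius z₁ z₂ (Complex.exp (2 * Real.pi * Complex.I / p)) ∈
      leaf z₁ z₂ p (fun x => min (δminus * x) (δplus * x))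
        (fun x => max (δminus * x) (δplus * x)) ∧
    IsConnected (leaf z₁ z₂ p (fun x => min (δminus * x) (δplus * x))
        (fun x => max (δminus * x) (δplus * x))) ∧
    ¬ IsPreconnected (leaf z₁ z₂ p (fun x => min (δminus * x) (δplus * x))
        (fun x => max (δminus * x) (δplus * x)) \
      {moebius z₁ z₂ (Complex.exp (2 * Real.pi * Complex.I / p))}) :=
  leaf_median_separating_point_general δminus δplus z₁ z₂ hz p hp
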